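/- Let Q_uu (n×n) be symmetric positive definite and V_θθ := Q_θθ - Q_θu Q_uu⁻¹ Q_uθ (p×p) be symmetric positive definite, with Q_uθ = Q_θuᵀ. Define V_θ := Q_θ - Q_θu Q_uu⁻¹ Q_u, m := -V_θθ⁻¹ V_θ, k := -Q_uu⁻¹ Q_u, M := -Q_uu⁻¹ Q_uθ. For ε ∈ (0,1], substituting δu = εk + εMm and δθ = εm into the full quadratic Q_uᵀδu + Q_θᵀδθ + ½δuᵀQ_uu δu + δuᵀQ_uθ δθ + ½δθᵀQ_θθ δθ yields exactly −ε(1 − ε/2)(λ + ψ), where λ = Q_uᵀ Q_uu⁻¹ Q_u and ψ = V_θᵀ V_θθ⁻¹ V_θ. -/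
import Mathlib


open Matrix

theorem stmt5 (n p : ℕ)
    (Quu : Matrix (Fin n) (Fin n) ℝ) (hQuu : Quu.PosDef)
    (Qθθ : Matrix (Fin p) (Fin p) ℝ)
    (Qθu : Matrix (Fin p) (Fin n) ℝ)
    (Qu : Fin n → ℝ) (Qθ : Fin p → ℝ)
    (Vθθ : Matrix (Fin p) (Fin p) ℝ) (hVθθdef : Vθθ = Qθθ - Qθu * Quu⁻¹ * Qθuᵀ)
    (hVθθ : Vθθ.PosDef)
    (Vθ : Fin p → ℝ) (hVθ : Vθ = Qθ - Qθu *ᵥ (Quu⁻¹ *ᵥ Qu))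
    (mvec : Fin p → ℝ) (hm : mvec = -(Vθθ⁻¹ *ᵥ Vθ))
    (k : Fin n → ℝ) (hk : k = -(Quu⁻¹ *ᵥ Qu))
    (M : Matrix (Fin n) (Fin p) ℝ) (hM : M = -(Quu⁻¹ * Qθuᵀ))
    (ε : ℝ) (hε : 0 < ε) (hε1 : ε ≤ 1)
    (du : Fin n → ℝ) (hdu : du = ε • k + ε • (M *ᵥ mvec))
    (dθ : Fin p → ℝ) (hdθ : dθ = ε • mvec)
    (lam ψ : ℝ) (hlam : lam = Qu ⬝ᵥ (Quu⁻¹ *ᵥ Qu)) (hψ : ψ = Vθ ⬝ᵥ (Vθθ⁻¹ *ᵥ Vθ)) :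
    Qu ⬝ᵥ du + Qθ ⬝ᵥ dθ + (1/2) * (du ⬝ᵥ (Quu *ᵥ du)) + du ⬝ᵥ (Qθuᵀ *ᵥ dθ)
      + (1/2) * (dθ ⬝ᵥ (Qθθ *ᵥ dθ)) = -(ε * (1 - ε/2)) * (lam + ψ) := by
  have hQdet : IsUnit Quu.det := isUnit_iff_ne_zero.mpr hQuu.det_pos.ne'
  have hVdet : IsUnit Vθθ.det := isUnit_iff_ne_zero.mpr hVθθ.det_pos.ne'
  have hQs : Quuᵀ = Quu := by
    have := hQuu.isHermitian.eq
    simpa using this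
  have hAs : (Quu⁻¹)ᵀ = Quu⁻¹ := by
    rw [Matrix.transpose_nonsing_inv, hQs]
  have hsym : ∀ (u v : Fin n → ℝ), u ⬝ᵥ (Quu⁻¹ *ᵥ v) = v ⬝ᵥ (Quu⁻¹ *ᵥ u) := by
    intro u v
    rw [Matrix.dotProduct_mulVec, ← Matrix.mulVec_transpose, hAs, dotProduct_comm]
  set A := Quu⁻¹ with hA
  set w := Vθθ⁻¹ *ᵥ Vθ with hw
  set s := Qθuᵀ *ᵥ w with hs
  have hVw : Vθθ *ᵥ w = Vθ := by
    rw [hw, Matrix.mulVec_mulVec, Matrix.mul_nonsing_inv _ hVdet, Matrix.one_mulVec]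
  have hdu' : du = ε • (A *ᵥ (s - Qu)) := by
    rw [hdu, hk, hM, hm, hs]
    simp [Matrix.neg_mulVec, Matrix.mulVec_neg, Matrix.mulVec_sub, ← Matrix.mulVec_mulVec,
      smul_add, smul_neg]
    module
  have hdθ' : dθ = (-ε) • w := by
    rw [hdθ, hm, hw]; simp [smul_neg]
  -- scalar abbreviations
  set a := Qu ⬝ᵥ (A *ᵥ Qu) with ha
  set b := Qu ⬝ᵥ (A *ᵥ s) with hb
  set c := s ⬝ᵥ (A *ᵥ s) with hc
  have hlam' : lam = a := hlam
  -- Qθ ⬝ᵥ w = ψ + b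
  have hCw : ∀ x : Fin n → ℝ, w ⬝ᵥ (Qθu *ᵥ x) = s ⬝ᵥ x := by
    intro x
    rw [Matrix.dotProduct_mulVec, ← Matrix.mulVec_transpose, ← hs]
  have hψ' : ψ = Vθ ⬝ᵥ w := hψ
  have hQθw : Qθ ⬝ᵥ w = ψ + b := by
    have h1 : Vθ ⬝ᵥ w = Qθ ⬝ᵥ w - (Qθu *ᵥ (A *ᵥ Qu)) ⬝ᵥ w := by
      rw [hVθ, sub_dotProduct]
    have h2 : (Qθu *ᵥ (A *ᵥ Qu)) ⬝ᵥ w = b := by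
      rw [dotProduct_comm, hCw, hb, hsym]
    rw [hψ', h1, h2]; ring
  -- w ⬝ᵥ Qθθ w = ψ + c
  have hwQθθ : w ⬝ᵥ (Qθθ *ᵥ w) = ψ + c := by
    have h1 : w ⬝ᵥ (Vθθ *ᵥ w) = ψ := by rw [hVw, dotProduct_comm, hψ']
    have h2 : w ⬝ᵥ ((Qθu * A * Qθuᵀ) *ᵥ w) = c := by
      rw [← Matrix.mulVec_mulVec, ← Matrix.mulVec_mulVec, hCw, ← hs, hc]
    rw [hVθθdef] at h1
    rw [Matrix.sub_mulVec, dotProduct_sub, h2] at h1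
    linarith
  -- du ⬝ᵥ Quu du
  have hQA : ∀ x : Fin n → ℝ, Quu *ᵥ (A *ᵥ x) = x := by
    intro x
    rw [Matrix.mulVec_mulVec, hA, Matrix.mul_nonsing_inv _ hQdet, Matrix.one_mulVec]
  have key1 : Qu ⬝ᵥ (A *ᵥ (s - Qu)) = b - a := by
    rw [Matrix.mulVec_sub, dotProduct_sub, hb, ha]
  have key2 : (A *ᵥ (s - Qu)) ⬝ᵥ (s - Qu) = c - 2*b + a := by
    rw [dotProduct_comm, Matrix.mulVec_sub, dotProduct_sub,
      sub_dotProduct, sub_dotProduct]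
    have e1 : s ⬝ᵥ (A *ᵥ Qu) = b := by rw [hsym, hb]
    rw [e1, ← hc, ← hb, ← ha]; ring
  have key3 : (A *ᵥ (s - Qu)) ⬝ᵥ s = c - b := by
    rw [dotProduct_comm, Matrix.mulVec_sub, dotProduct_sub]
    have e1 : s ⬝ᵥ (A *ᵥ Qu) = b := by rw [hsym, hb]
    rw [e1, ← hc]
  -- now expand the main expression
  have T1 : Qu ⬝ᵥ du = ε * (b - a) := by
    rw [hdu', dotProduct_smul, key1, smul_eq_mul]
  have T2 : Qθ ⬝ᵥ dθ = -ε * (ψ + b) := by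
    rw [hdθ', dotProduct_smul, hQθw, smul_eq_mul]
  have T3 : du ⬝ᵥ (Quu *ᵥ du) = ε^2 * (c - 2*b + a) := by
    rw [hdu', smul_dotProduct, Matrix.mulVec_smul, dotProduct_smul, hQA, key2,
      smul_eq_mul, smul_eq_mul]
    ring
  have T4 : du ⬝ᵥ (Qθuᵀ *ᵥ dθ) = -(ε^2) * (c - b) := by
    rw [hdu', hdθ', smul_dotProduct, Matrix.mulVec_smul, dotProduct_smul, ← hs,
      key3, smul_eq_mul, smul_eq_mul]
    ring
  have T5 : dθ ⬝ᵥ (Qθθ *ᵥ dθ) = ε^2 * (ψ + c) := by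
    rw [hdθ', smul_dotProduct, Matrix.mulVec_smul, dotProduct_smul, hwQθθ,
      smul_eq_mul, smul_eq_mul]
    ring
  rw [T1, T2, T3, T4, T5, hlam']
  ring
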